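/- Fix λ, σ, c > 0, θ* ∈ ℝ^d, a finite ground set E with feature vectors φ_e ∈ ℝ^d satisfying ‖φ_e‖₂ ≤ 1, a family 𝒜 of subsets of E of size at most K, and mean weights w̄(e) = ⟨φ_e, θ*⟩. Suppose sets A^t ∈ 𝒜, weight observations w_t(e) for e ∈ A^t (t = 1,…,n), and the statistics Σ_t^{-1} = (1/λ²) I + (1/σ²) Σ_{τ<t} Σ_{e∈A^τ} φ_e φ_eᵀ and Σ_t^{-1} θ̄_t = (1/σ²) Σ_{τ<t} Σ_{e∈A^τ} φ_e w_τ(e) satisfy: (a) for all t ≤ n and all e ∈ E, |⟨φ_e, θ̄_t − θ*⟩| ≤ c √(φ_eᵀ Σ_t φ_e); and (b) each A^t exactly maximizes Σ_{e∈A} ŵ_t(e) over A ∈ 𝒜, where ŵ_t(e) = ⟨φ_e, θ̄_t⟩ + c √(φ_eᵀ Σ_t φ_e). Then for any A* ∈ 𝒜 maximizing Σ_{e∈A} w̄(e) over 𝒜: Σ_{t=1}^n [ Σ_{e∈A*} w̄(e) − Σ_{e∈A^t} w̄(e) ] ≤ 2 c K λ √( d n ln(1 + nKλ²/(dσ²))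 / ln(1 + λ²/σ²) ). -/

import Mathlib

/-!
Optimism of `A t` for the UCB weights together with the two-sided confidence bounds gives a
per-round regret of at most `2c ∑_{e ∈ A t} √(φ_eᵀ Σ_t φ_e) ≤ 2cK √M_t`, where `M_t` is the largest
of these widths. By the matrix determinant lemma, adding the round-`t` features to `Σ_t⁻¹`
multiplies its determinant by at least `1 + M_t / σ²`, so `∑_t log (1 + M_t / σ²)` is bounded by
the growth of `log det Σ_t⁻¹`, which Jensen's inequality for `log` on the eigenvalues bounds by
`d log (1 + nKλ² / (dσ²))`. As `M_t ≤ λ²`, concavity of `log` gives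
`M_t log (1 + λ² / σ²) ≤ λ² log (1 + M_t / σ²)`, and Cauchy–Schwarz on `∑_t √M_t` concludes.
-/

open Matrix Finset

/-- The CombLinUCB covariance statistic:
Σ_t = ( (1/λ²) I + (1/σ²) Σ_{τ<t} Σ_{e∈A^τ} φ_e φ_eᵀ )⁻¹. -/
noncomputable def ucbSig {d L n : ℕ} (lam σ : ℝ) (φ : Fin L → Fin d → ℝ)
    (A : Fin n → Finset (Fin L)) (t : Fin n) : Matrix (Fin d) (Fin d) ℝ :=
  ((lam ^ 2)⁻¹ • (1 : Matrix (Fin d) (Fin d) ℝ) +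
    (σ ^ 2)⁻¹ • ∑ τ ∈ Finset.Iio t, ∑ e ∈ A τ, vecMulVec (φ e) (φ e))⁻¹

/-- The CombLinUCB mean statistic θ̄_t, i.e. the solution of
Σ_t⁻¹ θ̄_t = (1/σ²) Σ_{τ<t} Σ_{e∈A^τ} φ_e w_τ(e). -/
noncomputable def ucbTheta {d L n : ℕ} (lam σ : ℝ) (φ : Fin L → Fin d → ℝ)
    (A : Fin n → Finset (Fin L)) (w : Fin n → Fin L → ℝ) (t : Fin n) : Fin d → ℝ :=
  (ucbSig lam σ φ A t).mulVec
    ((σ ^ 2)⁻¹ • ∑ τ ∈ Finset.Iio t, ∑ e ∈ A τ, w τ e • φ e)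

/-- The UCB weight ŵ_t(e) = ⟨φ_e, θ̄_t⟩ + c √(φ_eᵀ Σ_t φ_e). -/
noncomputable def ucbWeight {d L n : ℕ} (lam σ c : ℝ) (φ : Fin L → Fin d → ℝ)
    (A : Fin n → Finset (Fin L)) (w : Fin n → Fin L → ℝ) (t : Fin n) (e : Fin L) : ℝ :=
  φ e ⬝ᵥ ucbTheta lam σ φ A w t +
    c * Real.sqrt (φ e ⬝ᵥ (ucbSig lam σ φ A t).mulVec (φ e))

namespace Matrix

variable {m ι : Type*} [Fintype m]

theorem posSemidef_sum_vecMulVec_self (s : Finset ι) (v : ι → m → ℝ) :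
    (∑ e ∈ s, vecMulVec (v e) (v e)).PosSemidef :=
  posSemidef_sum s fun e _ => by simpa using posSemidef_vecMulVec_self_star (v e)

variable [DecidableEq m]

theorem det_add_smul_vecMulVec_self {G : Matrix m m ℝ} (hG : IsUnit G.det) (b : ℝ)
    (v : m → ℝ) : (G + b • vecMulVec v v).det = G.det * (1 + b * (v ⬝ᵥ G⁻¹ *ᵥ v)) := by
  have hrank_one : b • vecMulVec v v = replicateCol Unit (b • v) * replicateRow Unit v := by
    rw [vecMulVec_eq Unit, replicateCol_smul, Matrix.smul_mul]
  rw [hrank_one, det_add_replicateCol_mul_replicateRow hG]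
  congr 1
  rw [det_unique, add_apply, one_apply_eq, ← replicateRow_vecMul,
    replicateRow_mul_replicateCol_apply, dotProduct_smul, smul_eq_mul, ← dotProduct_mulVec]

theorem det_le_det_add_smul_sum_vecMulVec_self {G : Matrix m m ℝ} (hG : G.PosDef) {b : ℝ}
    (hb : 0 ≤ b) (s : Finset ι) (v : ι → m → ℝ) :
    G.det ≤ (G + b • ∑ e ∈ s, vecMulVec (v e) (v e)).det := by
  classical
  induction s using Finset.induction generalizing G with
  | empty => simp
  | insert f s hf ih =>
    have hG' : (G + b • vecMulVec (v f) (v f)).PosDef := by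
      simpa using hG.add_posSemidef ((posSemidef_sum_vecMulVec_self {f} v).smul hb)
    calc G.det ≤ G.det * (1 + b * (v f ⬝ᵥ G⁻¹ *ᵥ v f)) := by
          have := mul_nonneg hb (hG.inv.posSemidef.dotProduct_mulVec_nonneg (v f))
          simp only [star_trivial] at this
          nlinarith [hG.det_pos]
      _ = (G + b • vecMulVec (v f) (v f)).det :=
          (det_add_smul_vecMulVec_self (isUnit_iff_ne_zero.mpr hG.det_pos.ne') b (v f)).symm
      _ ≤ _ := ih hG'
      _ = _ := by rw [sum_insert hf, smul_add, add_assoc]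

theorem dotProduct_inv_mulVec_le {G : Matrix m m ℝ} {a : ℝ} (ha : 0 < a)
    (hG : (G - a⁻¹ • 1).PosSemidef) (x : m → ℝ) : x ⬝ᵥ G⁻¹ *ᵥ x ≤ a * (x ⬝ᵥ x) := by
  obtain ⟨S, hS, rfl⟩ : ∃ S : Matrix m m ℝ, S.PosSemidef ∧ G = a⁻¹ • 1 + S :=
    ⟨_, hG, by abel⟩
  have hpos : (a⁻¹ • 1 + S).PosDef := (PosDef.one.smul (inv_pos.mpr ha)).add_posSemidef hS
  set y := (a⁻¹ • 1 + S)⁻¹ *ᵥ x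
  have hGy : (a⁻¹ • 1 + S) *ᵥ y = x := by
    rw [mulVec_mulVec, mul_nonsing_inv _ (isUnit_iff_ne_zero.mpr hpos.det_pos.ne'), one_mulVec]
  have hSy : 0 ≤ y ⬝ᵥ S *ᵥ y := by simpa using hS.dotProduct_mulVec_nonneg y
  have hxy : x ⬝ᵥ y = a⁻¹ * (y ⬝ᵥ y) + y ⬝ᵥ S *ᵥ y := by
    rw [← hGy, dotProduct_comm, add_mulVec, smul_mulVec, one_mulVec, dotProduct_add,
      dotProduct_smul, smul_eq_mul]
  have hyy : y ⬝ᵥ y ≤ a * (x ⬝ᵥ y) := by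
    rw [hxy, mul_add, ← mul_assoc, mul_inv_cancel₀ ha.ne', one_mul]
    exact le_add_of_nonneg_right (mul_nonneg ha.le hSy)
  have hcs : (x ⬝ᵥ y) ^ 2 ≤ (x ⬝ᵥ x) * (y ⬝ᵥ y) := by
    simpa [dotProduct, pow_two] using Finset.sum_mul_sq_le_sq_mul_sq Finset.univ x y
  have hxx : 0 ≤ x ⬝ᵥ x := by simpa using dotProduct_star_self_nonneg x
  have hxy0 : 0 ≤ x ⬝ᵥ y := by
    have hyy0 : 0 ≤ y ⬝ᵥ y := by simpa using dotProduct_star_self_nonneg y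
    rw [hxy]; positivity
  rcases hxy0.eq_or_lt with hzero | hxy_pos
  · rw [← hzero]; positivity
  · refine le_of_mul_le_mul_right ?_ hxy_pos
    calc x ⬝ᵥ y * x ⬝ᵥ y = (x ⬝ᵥ y) ^ 2 := by ring
      _ ≤ x ⬝ᵥ x * (a * x ⬝ᵥ y) := hcs.trans (mul_le_mul_of_nonneg_left hyy hxx)
      _ = a * x ⬝ᵥ x * x ⬝ᵥ y := by ring

theorem PosDef.log_det_le [Nonempty m] {G : Matrix m m ℝ} (hG : G.PosDef) :
    Real.log G.det ≤ Fintype.card m * Real.log (G.trace / Fintype.card m) := by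
  set μ := hG.isHermitian.eigenvalues
  have hd : (0 : ℝ) < Fintype.card m := by exact_mod_cast Fintype.card_pos
  have hdet : G.det = ∏ i, μ i := by simp [μ, hG.isHermitian.det_eq_prod_eigenvalues]
  have htr : G.trace / Fintype.card m = (Fintype.card m : ℝ)⁻¹ * ∑ i, μ i := by
    simp [μ, hG.isHermitian.trace_eq_sum_eigenvalues, div_eq_inv_mul]
  have hjensen := (StrictConcaveOn.concaveOn strictConcaveOn_log_Ioi).le_map_sum
    (t := Finset.univ) (w := fun _ => (Fintype.card m : ℝ)⁻¹) (p := μ)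
    (fun _ _ => by positivity) (by simp [Finset.card_univ, hd.ne'])
    (fun i _ => hG.eigenvalues_pos i)
  rw [hdet, Real.log_prod fun i _ => (hG.eigenvalues_pos i).ne', htr]
  simp only [smul_eq_mul, ← Finset.mul_sum] at hjensen
  rwa [inv_mul_le_iff₀ hd] at hjensen

end Matrix

section MaxQuadForm

variable {m ι : Type*} [Fintype m]

noncomputable def maxQuadForm (P : Matrix m m ℝ) (v : ι → m → ℝ) (s : Finset ι) : ℝ :=
  if h : s.Nonempty then s.sup' h fun e => v e ⬝ᵥ P *ᵥ v e else 0

variable {P : Matrix m m ℝ} {v : ι → m → ℝ} {s : Finset ι}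

theorem quadForm_le_maxQuadForm {e : ι} (he : e ∈ s) :
    v e ⬝ᵥ P *ᵥ v e ≤ maxQuadForm P v s := by
  rw [maxQuadForm, dif_pos ⟨e, he⟩]
  exact le_sup' (fun e => v e ⬝ᵥ P *ᵥ v e) he

theorem maxQuadForm_nonneg (hP : P.PosSemidef) : 0 ≤ maxQuadForm P v s := by
  rcases s.eq_empty_or_nonempty with rfl | ⟨e, he⟩
  · simp [maxQuadForm]
  · have := hP.dotProduct_mulVec_nonneg (v e)
    rw [star_trivial] at this
    exact this.trans (quadForm_le_maxQuadForm he)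

theorem maxQuadForm_le {c : ℝ} (hc : 0 ≤ c) (h : ∀ e ∈ s, v e ⬝ᵥ P *ᵥ v e ≤ c) :
    maxQuadForm P v s ≤ c := by
  unfold maxQuadForm
  split_ifs with hs
  · exact sup'_le hs _ h
  · exact hc

theorem det_mul_one_add_maxQuadForm_le [DecidableEq m] {G : Matrix m m ℝ} (hG : G.PosDef)
    {b : ℝ} (hb : 0 ≤ b) :
    G.det * (1 + b * maxQuadForm G⁻¹ v s) ≤ (G + b • ∑ e ∈ s, vecMulVec (v e) (v e)).det := by
  classical
  rcases s.eq_empty_or_nonempty with rfl | hs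
  · simp [maxQuadForm]
  obtain ⟨e, he, hmax⟩ := exists_mem_eq_sup' hs fun e => v e ⬝ᵥ G⁻¹ *ᵥ v e
  have hGe : (G + b • vecMulVec (v e) (v e)).PosDef := by
    simpa using hG.add_posSemidef ((posSemidef_sum_vecMulVec_self {e} v).smul hb)
  calc G.det * (1 + b * maxQuadForm G⁻¹ v s)
      = (G + b • vecMulVec (v e) (v e)).det := by
        rw [maxQuadForm, dif_pos hs, hmax,
          det_add_smul_vecMulVec_self (isUnit_iff_ne_zero.mpr hG.det_pos.ne')]
    _ ≤ (G + b • vecMulVec (v e) (v e) + b • ∑ f ∈ s.erase e, vecMulVec (v f) (v f)).det :=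
        det_le_det_add_smul_sum_vecMulVec_self hGe hb _ v
    _ = _ := by rw [← add_sum_erase s _ he, smul_add, add_assoc]

end MaxQuadForm

theorem Real.mul_log_one_add_div_le {x a s : ℝ} (hs : 0 ≤ s) (hx : 0 ≤ x) (hxa : x ≤ a) :
    x * Real.log (1 + a / s) ≤ a * Real.log (1 + x / s) := by
  rcases hx.eq_or_lt with rfl | hx
  · simp
  have ha : 0 < a := hx.trans_le hxa
  have hconc := (StrictConcaveOn.concaveOn strictConcaveOn_log_Ioi).2
    (show 1 + a / s ∈ Set.Ioi 0 by simp only [Set.mem_Ioi]; positivity)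
    (show (1 : ℝ) ∈ Set.Ioi 0 by simp) (show 0 ≤ x / a by positivity)
    (show 0 ≤ 1 - x / a by rw [sub_nonneg, div_le_one ha]; exact hxa) (by ring)
  have hcomb : (x / a) • (1 + a / s) + (1 - x / a) • (1 : ℝ) = 1 + x / s := by
    have : x / a * (a / s) = x / s := by
      rw [div_mul_div_comm, mul_comm x a, mul_div_mul_left _ _ ha.ne']
    simp only [smul_eq_mul]
    linear_combination this
  rw [hcomb, Real.log_one, smul_zero, add_zero, smul_eq_mul] at hconc
  calc x * Real.log (1 + a / s) = a * (x / a * Real.log (1 + a / s)) := by field_simp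
    _ ≤ a * Real.log (1 + x / s) := mul_le_mul_of_nonneg_left hconc ha.le

section DesignMatrix

variable {m ι : Type*} [DecidableEq m]

noncomputable def designMatrix (a s : ℝ) (v : ι → m → ℝ) (S : ℕ → Finset ι) (t : ℕ) :
    Matrix m m ℝ :=
  a⁻¹ • 1 + s⁻¹ • ∑ τ ∈ range t, ∑ e ∈ S τ, vecMulVec (v e) (v e)

variable {a s : ℝ} {v : ι → m → ℝ} {S : ℕ → Finset ι}

theorem designMatrix_succ (t : ℕ) :
    designMatrix a s v S (t + 1) =
      designMatrix a s v S t + s⁻¹ • ∑ e ∈ S t, vecMulVec (v e) (v e) := by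
  rw [designMatrix, designMatrix, sum_range_succ, smul_add, add_assoc]

variable [Fintype m]

theorem det_designMatrix_zero : (designMatrix a s v S 0).det = a⁻¹ ^ Fintype.card m := by
  simp [designMatrix]

theorem posSemidef_designMatrix_sub_smul_one (hs : 0 ≤ s) (t : ℕ) :
    (designMatrix a s v S t - a⁻¹ • 1).PosSemidef := by
  rw [designMatrix, add_sub_cancel_left]
  exact (posSemidef_sum _ fun τ _ => posSemidef_sum_vecMulVec_self (S τ) v).smul
    (inv_nonneg.mpr hs)

theorem posDef_designMatrix (ha : 0 < a) (hs : 0 ≤ s) (t : ℕ) :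
    (designMatrix a s v S t).PosDef := by
  simpa using (PosDef.one.smul (inv_pos.mpr ha)).add_posSemidef
    (posSemidef_designMatrix_sub_smul_one (a := a) (v := v) (S := S) hs t)

theorem trace_designMatrix_le (hs : 0 ≤ s) (hv : ∀ e, v e ⬝ᵥ v e ≤ 1) {K : ℕ}
    (hS : ∀ τ, #(S τ) ≤ K) (t : ℕ) :
    (designMatrix a s v S t).trace ≤ Fintype.card m * a⁻¹ + s⁻¹ * (t * K) := by
  have hsum : ∑ τ ∈ range t, ∑ e ∈ S τ, v e ⬝ᵥ v e ≤ t * K :=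
    calc ∑ τ ∈ range t, ∑ e ∈ S τ, v e ⬝ᵥ v e ≤ ∑ τ ∈ range t, (K : ℝ) := by
          refine sum_le_sum fun τ _ => (sum_le_card_nsmul _ _ 1 fun e _ => hv e).trans ?_
          simpa using hS τ
      _ = t * K := by simp
  simp only [designMatrix, trace_add, trace_smul, trace_one, trace_sum, trace_vecMulVec,
    smul_eq_mul]
  rw [mul_comm (a⁻¹)]
  gcongr

theorem sum_log_one_add_maxQuadForm_le (ha : 0 < a) (hs : 0 ≤ s) (n : ℕ) :
    ∑ t ∈ range n, Real.log (1 + s⁻¹ * maxQuadForm (designMatrix a s v S t)⁻¹ v (S t)) ≤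
      Real.log (designMatrix a s v S n).det - Real.log (designMatrix a s v S 0).det := by
  rw [← sum_range_sub (fun t => Real.log (designMatrix a s v S t).det)]
  refine sum_le_sum fun t _ => ?_
  have hG := posDef_designMatrix (v := v) (S := S) ha hs t
  have hstep := det_mul_one_add_maxQuadForm_le hG (inv_nonneg.mpr hs) (v := v) (s := S t)
  rw [← designMatrix_succ] at hstep
  have hone : 0 < 1 + s⁻¹ * maxQuadForm (designMatrix a s v S t)⁻¹ v (S t) := by
    have := maxQuadForm_nonneg hG.inv.posSemidef (v := v) (s := S t)
    positivity
  have := Real.log_le_log (mul_pos hG.det_pos hone) hstep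
  rw [Real.log_mul hG.det_pos.ne' hone.ne'] at this
  linarith

theorem log_det_designMatrix_sub_le [Nonempty m] (ha : 0 < a) (hs : 0 < s)
    (hv : ∀ e, v e ⬝ᵥ v e ≤ 1) {K : ℕ} (hS : ∀ τ, #(S τ) ≤ K) (n : ℕ) :
    Real.log (designMatrix a s v S n).det - Real.log (designMatrix a s v S 0).det ≤
      Fintype.card m * Real.log (1 + n * K * a / (Fintype.card m * s)) := by
  set d : ℝ := (Fintype.card m : ℝ)
  have hd : 0 < d := by simp [d, Fintype.card_pos]
  have hG := posDef_designMatrix (v := v) (S := S) ha hs.le n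
  set tr := (designMatrix a s v S n).trace
  have htr : tr / d * a ≤ 1 + n * K * a / (d * s) :=
    calc tr / d * a ≤ (d * a⁻¹ + s⁻¹ * (n * K)) / d * a := by
          gcongr; exact trace_designMatrix_le hs.le hv hS n
      _ = 1 + n * K * a / (d * s) := by field_simp
  have htr_pos : 0 < tr / d * a := mul_pos (div_pos hG.trace_pos hd) ha
  calc Real.log (designMatrix a s v S n).det - Real.log (designMatrix a s v S 0).det
      ≤ d * Real.log (tr / d) + d * Real.log a := by
        rw [det_designMatrix_zero, Real.log_pow, Real.log_inv]
        linarith [hG.log_det_le]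
    _ = d * Real.log (tr / d * a) := by
        rw [Real.log_mul (div_pos hG.trace_pos hd).ne' ha.ne', mul_add]
    _ ≤ d * Real.log (1 + n * K * a / (d * s)) := by gcongr

theorem sum_maxQuadForm_le [Nonempty m] (ha : 0 < a) (hs : 0 < s)
    (hv : ∀ e, v e ⬝ᵥ v e ≤ 1) {K : ℕ} (hS : ∀ τ, #(S τ) ≤ K) (n : ℕ) :
    ∑ t ∈ range n, maxQuadForm (designMatrix a s v S t)⁻¹ v (S t) ≤
      a * (Fintype.card m * Real.log (1 + n * K * a / (Fintype.card m * s))) /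
        Real.log (1 + a / s) := by
  set M := fun t => maxQuadForm (designMatrix a s v S t)⁻¹ v (S t)
  have hM_nonneg (t : ℕ) : 0 ≤ M t :=
    maxQuadForm_nonneg (posDef_designMatrix ha hs.le t).inv.posSemidef
  have hM_le (t : ℕ) : M t ≤ a :=
    maxQuadForm_le ha.le fun e _ =>
      (dotProduct_inv_mulVec_le ha (posSemidef_designMatrix_sub_smul_one hs.le t) (v e)).trans
        (mul_le_of_le_one_right ha.le (hv e))
  have hL : 0 < Real.log (1 + a / s) :=
    Real.log_pos (by simp only [lt_add_iff_pos_right]; positivity)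
  rw [le_div_iff₀ hL, sum_mul]
  calc ∑ t ∈ range n, M t * Real.log (1 + a / s)
      ≤ ∑ t ∈ range n, a * Real.log (1 + s⁻¹ * M t) := by
        refine sum_le_sum fun t _ => ?_
        rw [inv_mul_eq_div]
        exact Real.mul_log_one_add_div_le hs.le (hM_nonneg t) (hM_le t)
    _ = a * ∑ t ∈ range n, Real.log (1 + s⁻¹ * M t) := (mul_sum _ _ _).symm
    _ ≤ a * (Fintype.card m * Real.log (1 + n * K * a / (Fintype.card m * s))) := by
        gcongr
        exact (sum_log_one_add_maxQuadForm_le ha hs.le n).trans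
          (log_det_designMatrix_sub_le ha hs hv hS n)

end DesignMatrix

theorem Real.sum_sqrt_le_sqrt_card_mul_sum {ι : Type*} (s : Finset ι) {f : ι → ℝ}
    (hf : ∀ i, 0 ≤ f i) : ∑ i ∈ s, √(f i) ≤ √(#s * ∑ i ∈ s, f i) := by
  simpa [Real.sqrt_mul (Nat.cast_nonneg _)] using
    Real.sum_sqrt_mul_sqrt_le s (f := fun _ => 1) (fun _ => zero_le_one) hf

theorem sum_sub_sum_le_sum_of_optimistic {ι : Type*} {μ μ' r : ι → ℝ} {B B' : Finset ι}
    (hlow : ∀ e ∈ B', μ e ≤ μ' e) (hup : ∀ e ∈ B, μ' e ≤ μ e + r e)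
    (hopt : ∑ e ∈ B', μ' e ≤ ∑ e ∈ B, μ' e) :
    ∑ e ∈ B', μ e - ∑ e ∈ B, μ e ≤ ∑ e ∈ B, r e := by
  have hB' := sum_le_sum hlow
  have hB := sum_le_sum hup
  rw [sum_add_distrib] at hB
  linarith

section UCB

variable {d L n : ℕ}

def playedSets {ι : Type*} (A : Fin n → Finset ι) (τ : ℕ) : Finset ι :=
  if h : τ < n then A ⟨τ, h⟩ else ∅

@[simp]
theorem playedSets_val {ι : Type*} (A : Fin n → Finset ι) (t : Fin n) :
    playedSets A t = A t := by
  simp [playedSets]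

theorem card_playedSets_le {ι : Type*} {A : Fin n → Finset ι} {K : ℕ} (hA : ∀ t, #(A t) ≤ K)
    (τ : ℕ) : #(playedSets A τ) ≤ K := by
  unfold playedSets
  split_ifs
  · exact hA _
  · simp

theorem ucbSig_eq_inv_designMatrix (lam σ : ℝ) (φ : Fin L → Fin d → ℝ)
    (A : Fin n → Finset (Fin L)) (t : Fin n) :
    ucbSig lam σ φ A t = (designMatrix (lam ^ 2) (σ ^ 2) φ (playedSets A) t)⁻¹ := by
  have hIio : ∑ τ ∈ Iio t, ∑ e ∈ A τ, vecMulVec (φ e) (φ e) =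
      ∑ τ ∈ range t, ∑ e ∈ playedSets A τ, vecMulVec (φ e) (φ e) := by
    rw [← Nat.Iio_eq_range, ← Fin.map_valEmbedding_Iio, sum_map]
    simp
  rw [ucbSig, designMatrix, hIio]

theorem sum_sub_sum_le_of_ucb {lam σ c : ℝ} (hc : 0 ≤ c) {θs : Fin d → ℝ}
    {φ : Fin L → Fin d → ℝ} {A : Fin n → Finset (Fin L)} {w : Fin n → Fin L → ℝ} {t : Fin n}
    {Astar : Finset (Fin L)} {K : ℕ} (hK : #(A t) ≤ K)
    (hconf : ∀ e, |φ e ⬝ᵥ (ucbTheta lam σ φ A w t - θs)| ≤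
      c * √(φ e ⬝ᵥ (ucbSig lam σ φ A t) *ᵥ φ e))
    (hopt : ∑ e ∈ Astar, ucbWeight lam σ c φ A w t e ≤ ∑ e ∈ A t, ucbWeight lam σ c φ A w t e) :
    ∑ e ∈ Astar, φ e ⬝ᵥ θs - ∑ e ∈ A t, φ e ⬝ᵥ θs ≤ 2 * c * K *
      √(maxQuadForm (designMatrix (lam ^ 2) (σ ^ 2) φ (playedSets A) t)⁻¹ φ (playedSets A t)) := by
  rw [playedSets_val, ← ucbSig_eq_inv_designMatrix]
  set P := ucbSig lam σ φ A t
  have hweight (e : Fin L) : φ e ⬝ᵥ θs ≤ ucbWeight lam σ c φ A w t e ∧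
      ucbWeight lam σ c φ A w t e ≤ φ e ⬝ᵥ θs + 2 * c * √(φ e ⬝ᵥ P *ᵥ φ e) := by
    have := abs_le.mp (hconf e)
    rw [dotProduct_sub] at this
    unfold ucbWeight
    constructor <;> linarith
  calc ∑ e ∈ Astar, φ e ⬝ᵥ θs - ∑ e ∈ A t, φ e ⬝ᵥ θs
      ≤ ∑ e ∈ A t, 2 * c * √(φ e ⬝ᵥ P *ᵥ φ e) :=
        sum_sub_sum_le_sum_of_optimistic (fun e _ => (hweight e).1) (fun e _ => (hweight e).2) hopt
    _ ≤ #(A t) • (2 * c * √(maxQuadForm P φ (A t))) :=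
        sum_le_card_nsmul _ _ _ fun e he => by gcongr; exact quadForm_le_maxQuadForm he
    _ ≤ 2 * c * K * √(maxQuadForm P φ (A t)) := by
        rw [nsmul_eq_mul, mul_comm, mul_right_comm]
        gcongr

end UCB

theorem stmt_16_general {d L n K : ℕ} (hd : 0 < d)
    (lam σ c : ℝ) (hlam : 0 < lam) (hσ : 0 < σ) (hc : 0 < c)
    (θs : Fin d → ℝ) (φ : Fin L → Fin d → ℝ)
    (hφ : ∀ e, Real.sqrt (φ e ⬝ᵥ φ e) ≤ 1)
    (𝒜 : Finset (Finset (Fin L))) (h𝒜 : ∀ B ∈ 𝒜, B.card ≤ K)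
    (A : Fin n → Finset (Fin L)) (hA : ∀ t, A t ∈ 𝒜)
    (w : Fin n → Fin L → ℝ)
    (hconf : ∀ t e, |φ e ⬝ᵥ (ucbTheta lam σ φ A w t - θs)| ≤
      c * Real.sqrt (φ e ⬝ᵥ (ucbSig lam σ φ A t).mulVec (φ e)))
    (hopt : ∀ t, ∀ B ∈ 𝒜,
      ∑ e ∈ B, ucbWeight lam σ c φ A w t e ≤ ∑ e ∈ A t, ucbWeight lam σ c φ A w t e)
    (Astar : Finset (Fin L)) (hAstar : Astar ∈ 𝒜) :
    ∑ t, ((∑ e ∈ Astar, φ e ⬝ᵥ θs) - ∑ e ∈ A t, φ e ⬝ᵥ θs) ≤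
      2 * c * K * lam * Real.sqrt (d * n * Real.log (1 + n * K * lam ^ 2 / (d * σ ^ 2)) /
        Real.log (1 + lam ^ 2 / σ ^ 2)) := by
  have : Nonempty (Fin d) := ⟨⟨0, hd⟩⟩
  set M := fun t =>
    maxQuadForm (designMatrix (lam ^ 2) (σ ^ 2) φ (playedSets A) t)⁻¹ φ (playedSets A t)
  have hM_nonneg (t : ℕ) : 0 ≤ M t :=
    maxQuadForm_nonneg (posDef_designMatrix (pow_pos hlam 2) (pow_pos hσ 2).le t).inv.posSemidef
  have hpotential := sum_maxQuadForm_le (pow_pos hlam 2) (pow_pos hσ 2)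
    (fun e => Real.sqrt_le_one.mp (hφ e)) (card_playedSets_le fun t => h𝒜 _ (hA t)) n
  rw [Fintype.card_fin] at hpotential
  set D := Real.log (1 + n * K * lam ^ 2 / (d * σ ^ 2))
  set L₀ := Real.log (1 + lam ^ 2 / σ ^ 2)
  calc ∑ t, (∑ e ∈ Astar, φ e ⬝ᵥ θs - ∑ e ∈ A t, φ e ⬝ᵥ θs)
      ≤ ∑ t : Fin n, 2 * c * K * √(M t) := sum_le_sum fun t _ =>
        sum_sub_sum_le_of_ucb hc.le (h𝒜 _ (hA t)) (hconf t) (hopt t Astar hAstar)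
    _ = 2 * c * K * ∑ t ∈ range n, √(M t) := by
        rw [mul_sum, Fin.sum_univ_eq_sum_range (fun t => 2 * c * K * √(M t))]
    _ ≤ 2 * c * K * √(n * ∑ t ∈ range n, M t) := by
        gcongr
        simpa using Real.sum_sqrt_le_sqrt_card_mul_sum (range n) hM_nonneg
    _ ≤ 2 * c * K * √(n * (lam ^ 2 * (d * D) / L₀)) := by gcongr
    _ = 2 * c * K * lam * √(d * n * D / L₀) := by
        rw [show (n : ℝ) * (lam ^ 2 * (d * D) / L₀) = lam ^ 2 * (d * n * D / L₀) by ring,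
          Real.sqrt_mul (sq_nonneg lam), Real.sqrt_sq hlam.le]
        ring

/-- the deterministic 'good event' regret bound of the CombLinUCB analysis.
Under (a) the confidence inequalities |⟨φ_e, θ̄_t − θ*⟩| ≤ c √(φ_eᵀ Σ_t φ_e) and (b) exact
optimism of each played set A^t for the UCB weights ŵ_t, for any A* ∈ 𝒜 maximizing the
mean weights w̄(e) = ⟨φ_e, θ*⟩:
Σ_{t=1}^n [ Σ_{e∈A*} w̄(e) − Σ_{e∈A^t} w̄(e) ]
  ≤ 2 c K λ √( d n ln(1 + nKλ²/(dσ²)) / ln(1 + λ²/σ²) ). -/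
theorem stmt_16 {d L n K : ℕ} (hd : 0 < d) (hK : 1 ≤ K)
    (lam σ c : ℝ) (hlam : 0 < lam) (hσ : 0 < σ) (hc : 0 < c)
    (θs : Fin d → ℝ) (φ : Fin L → Fin d → ℝ)
    (hφ : ∀ e, Real.sqrt (φ e ⬝ᵥ φ e) ≤ 1)
    (𝒜 : Finset (Finset (Fin L))) (h𝒜 : ∀ B ∈ 𝒜, B.card ≤ K)
    (A : Fin n → Finset (Fin L)) (hA : ∀ t, A t ∈ 𝒜)
    (w : Fin n → Fin L → ℝ)
    (hconf : ∀ t e, |φ e ⬝ᵥ (ucbTheta lam σ φ A w t - θs)| ≤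
      c * Real.sqrt (φ e ⬝ᵥ (ucbSig lam σ φ A t).mulVec (φ e)))
    (hopt : ∀ t, ∀ B ∈ 𝒜,
      ∑ e ∈ B, ucbWeight lam σ c φ A w t e ≤ ∑ e ∈ A t, ucbWeight lam σ c φ A w t e)
    (Astar : Finset (Fin L)) (hAstar : Astar ∈ 𝒜)
    (hAstarOpt : ∀ B ∈ 𝒜, ∑ e ∈ B, φ e ⬝ᵥ θs ≤ ∑ e ∈ Astar, φ e ⬝ᵥ θs) :
    ∑ t, ((∑ e ∈ Astar, φ e ⬝ᵥ θs) - ∑ e ∈ A t, φ e ⬝ᵥ θs) ≤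
      2 * c * K * lam * Real.sqrt (d * n * Real.log (1 + n * K * lam ^ 2 / (d * σ ^ 2)) /
        Real.log (1 + lam ^ 2 / σ ^ 2)) :=
  stmt_16_general hd lam σ c hlam hσ hc θs φ hφ 𝒜 h𝒜 A hA w hconf hopt Astar hAstar
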